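/- Let X ⊆ C_n = ⟨x⟩ and let U_X = X ⊎ X^{(−1)} (multiset union). The dihedrant Dih(n,X,X) = Cay(D_n, X ∪ Xτ) is a directed strongly regular graph with parameters (2n, 2|X|, μ, λ, t) if and only if t = μ and X̄·U̅_X = (λ−μ)X̄ + μ·C̄_n in Z[C_n]. -/

import Mathlib

open scoped Classical

noncomputable def adjMat {V : Type*} [Fintype V] (r : V → V → Prop) : Matrix V V ℤ :=
  Matrix.of fun i j => if r i j then 1 else 0

noncomputable def allOnes (V : Type*) [Fintype V] : Matrix V V ℤ :=
  Matrix.of fun _ _ => 1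

/-- `r` is (the adjacency relation of) a directed strongly regular graph with
parameters `(n, k, μ, lam, t)`. -/
def IsDSRG {V : Type*} [Fintype V] [DecidableEq V] (r : V → V → Prop)
    (n k μ lam t : ℤ) : Prop :=
  (∀ i, ¬ r i i) ∧ ((Fintype.card V : ℤ) = n) ∧
  allOnes V * adjMat r = k • allOnes V ∧
  adjMat r * allOnes V = k • allOnes V ∧
  adjMat r * adjMat r =
    t • (1 : Matrix V V ℤ) + lam • adjMat r + μ • (allOnes V - 1 - adjMat r)

/-- The Cayley digraph relation of `S ⊆ G`: `g → h` iff `g⁻¹ * h ∈ S`. -/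
def cayleyRel {G : Type*} [Group G] (S : Finset G) : G → G → Prop :=
  fun g h => g⁻¹ * h ∈ S

/-- The connection set `X ∪ Yτ ⊆ D_n`, with `C_n` realized additively as `ZMod n`,
`x^a` as `DihedralGroup.r a` and `τ = DihedralGroup.sr 0`. -/
noncomputable def dihSet (n : ℕ) (X Y : Finset (ZMod n)) : Finset (DihedralGroup n) :=
  X.image DihedralGroup.r ∪ Y.image (fun a => DihedralGroup.r a * DihedralGroup.sr 0)

/-- `X̄`, the sum of the elements of `X` in the group ring `ℤ[C_n]`. -/
noncomputable def fbar {n : ℕ} (X : Finset (ZMod n)) : AddMonoidAlgebra ℤ (ZMod n) :=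
  ∑ a ∈ X, AddMonoidAlgebra.single a 1

/-- `X^{(−1)}‾`, the sum of the inverses of the elements of `X` in `ℤ[C_n]`. -/
noncomputable def fbarInv {n : ℕ} (X : Finset (ZMod n)) : AddMonoidAlgebra ℤ (ZMod n) :=
  ∑ a ∈ X, AddMonoidAlgebra.single (-a) 1

/-- `C̄_n`, the sum of all elements of `C_n` in `ℤ[C_n]`. -/
noncomputable def cbar (n : ℕ) [NeZero n] : AddMonoidAlgebra ℤ (ZMod n) :=
  ∑ a : ZMod n, AddMonoidAlgebra.single a 1

/-! A Cayley digraph `Cay(G, S)` is a DSRG exactly when `1 ∉ S` and the number of factorisations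
`d = k k'` with `k, k' ∈ S` equals `t`, `λ` or `μ` according as `d = 1`, `d ∈ S` or neither.
For `S = X ∪ Xτ` in `D_n`, the factorisations of `x^c` and of `x^c τ` are both counted by the
coefficient of `x^c` in `X̄·U̅_X` (for `x^c`, the products `x^a · x^b` and `x^a τ · x^b τ = x^(a-b)`
give `X̄·X̄` and `X̄·X^{(−1)}‾`). The reflections, which are never `1`, thus force
`X̄·U̅_X = (λ−μ)X̄ + μC̄_n`; the identity then only adds `t = μ`, the coefficient at `0 ∉ X`. -/

open Finset DihedralGroup

section GroupRing

variable {n : ℕ}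

lemma coeff_fbar (X : Finset (ZMod n)) (c : ZMod n) :
    (fbar X).coeff c = if c ∈ X then 1 else 0 := by
  simp [fbar, AddMonoidAlgebra.coeff_sum, Finsupp.single_apply]

lemma coeff_fbarInv (X : Finset (ZMod n)) (c : ZMod n) :
    (fbarInv X).coeff c = if -c ∈ X then 1 else 0 := by
  simp [fbarInv, AddMonoidAlgebra.coeff_sum, Finsupp.single_apply, neg_eq_iff_eq_neg]

lemma coeff_cbar [NeZero n] (c : ZMod n) : (cbar n).coeff c = 1 := by
  simp [cbar, AddMonoidAlgebra.coeff_sum, Finsupp.single_apply]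

lemma coeff_mul_fbar (x : AddMonoidAlgebra ℤ (ZMod n)) (X : Finset (ZMod n)) (c : ZMod n) :
    (x * fbar X).coeff c = ∑ a ∈ X, x.coeff (c - a) := by
  simp [fbar, Finset.mul_sum, AddMonoidAlgebra.coeff_sum, sub_eq_add_neg]

lemma coeff_smul_fbar_add_smul_cbar [NeZero n] (X : Finset (ZMod n)) (a b : ℤ)
    (c : ZMod n) : ((a - b) • fbar X + b • cbar n).coeff c = if c ∈ X then a else b := by
  simp only [AddMonoidAlgebra.coeff_add, AddMonoidAlgebra.coeff_smul, Finsupp.add_apply,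
    Finsupp.smul_apply, coeff_fbar, coeff_cbar, smul_eq_mul]
  split_ifs <;> ring

end GroupRing

section Cayley

variable {G : Type*} [Group G] [Fintype G] [DecidableEq G]

lemma adjMat_cayleyRel_apply (S : Finset G) (g h : G) :
    adjMat (cayleyRel S) g h = if g⁻¹ * h ∈ S then 1 else 0 := by
  simp only [adjMat, cayleyRel, Matrix.of_apply]
  congr

lemma allOnes_mul_adjMat_cayleyRel (S : Finset G) :
    allOnes G * adjMat (cayleyRel S) = (#S : ℤ) • allOnes G := by
  ext g h
  simp only [Matrix.mul_apply, allOnes, adjMat_cayleyRel_apply, Matrix.of_apply, one_mul,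
    Matrix.smul_apply, smul_eq_mul, mul_one]
  rw [← Equiv.sum_comp ((Equiv.mulRight h⁻¹).trans (Equiv.inv G))]
  simp

lemma adjMat_cayleyRel_mul_allOnes (S : Finset G) :
    adjMat (cayleyRel S) * allOnes G = (#S : ℤ) • allOnes G := by
  ext g h
  simp only [Matrix.mul_apply, allOnes, adjMat_cayleyRel_apply, Matrix.of_apply, mul_one,
    Matrix.smul_apply, smul_eq_mul]
  rw [← Equiv.sum_comp (Equiv.mulLeft g)]
  simp

lemma adjMat_cayleyRel_mul_self_apply (S : Finset G) (g h : G) :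
    (adjMat (cayleyRel S) * adjMat (cayleyRel S)) g h = #{k ∈ S | k⁻¹ * (g⁻¹ * h) ∈ S} := by
  simp only [Matrix.mul_apply, adjMat_cayleyRel_apply]
  rw [← Equiv.sum_comp (Equiv.mulLeft g)]
  simp only [Equiv.coe_mulLeft, inv_mul_cancel_left, mul_inv_rev, mul_assoc, ite_mul, one_mul,
    zero_mul]
  rw [Finset.sum_ite_mem_eq, Finset.natCast_card_filter]

theorem isDSRG_cayleyRel_iff (S : Finset G) (μ lam t : ℤ) :
    IsDSRG (cayleyRel S) (Fintype.card G) #S μ lam t ↔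
      (1 : G) ∉ S ∧ ∀ d : G,
        (#{k ∈ S | k⁻¹ * d ∈ S} : ℤ) = if d = 1 then t else if d ∈ S then lam else μ := by
  have irrefl_iff : (∀ g, ¬ cayleyRel S g g) ↔ (1 : G) ∉ S := by simp [cayleyRel]
  have rhs_apply (h1 : (1 : G) ∉ S) (g h : G) :
      (t • (1 : Matrix G G ℤ) + lam • adjMat (cayleyRel S) +
        μ • (allOnes G - 1 - adjMat (cayleyRel S))) g h =
        if g⁻¹ * h = 1 then t else if g⁻¹ * h ∈ S then lam else μ := by
    simp only [Matrix.add_apply, Matrix.smul_apply, Matrix.sub_apply, Matrix.one_apply,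
      adjMat_cayleyRel_apply, allOnes, Matrix.of_apply, smul_eq_mul, ← inv_mul_eq_one (a := g)]
    split_ifs <;> simp_all
  constructor
  · rintro ⟨hirr, -, -, -, hsq⟩
    have h1 := irrefl_iff.mp hirr
    refine ⟨h1, fun d => ?_⟩
    have hd := congrFun (congrFun hsq 1) d
    rwa [adjMat_cayleyRel_mul_self_apply, rhs_apply h1, inv_one, one_mul] at hd
  · rintro ⟨h1, hcount⟩
    refine ⟨irrefl_iff.mpr h1, rfl, allOnes_mul_adjMat_cayleyRel S,
      adjMat_cayleyRel_mul_allOnes S, ?_⟩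
    ext g h
    rw [adjMat_cayleyRel_mul_self_apply, rhs_apply h1, hcount]

end Cayley

section Dihedral

variable {n : ℕ}

lemma forall_dihedralGroup {p : DihedralGroup n → Prop} :
    (∀ d, p d) ↔ (∀ i, p (r i)) ∧ ∀ i, p (sr i) :=
  ⟨fun h => ⟨fun _ => h _, fun _ => h _⟩, fun ⟨hr, hsr⟩ d => by cases d; exacts [hr _, hsr _]⟩

lemma r_mul_sr_zero (a : ZMod n) : r a * sr 0 = sr (-a) := by
  rw [r_mul_sr, zero_sub]

lemma r_mem_dihSet {X Y : Finset (ZMod n)} {c : ZMod n} : r c ∈ dihSet n X Y ↔ c ∈ X := by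
  simp [dihSet]

lemma sr_mem_dihSet {X Y : Finset (ZMod n)} {c : ZMod n} : sr c ∈ dihSet n X Y ↔ -c ∈ Y := by
  simp [dihSet, neg_eq_iff_eq_neg]

lemma sum_dihSet {M : Type*} [AddCommMonoid M] (X Y : Finset (ZMod n))
    (f : DihedralGroup n → M) :
    ∑ k ∈ dihSet n X Y, f k = ∑ a ∈ X, f (r a) + ∑ a ∈ Y, f (sr (-a)) := by
  have hdisj : Disjoint (X.image r) (Y.image fun a => r a * sr 0) := by
    simp [Finset.disjoint_left]
  rw [dihSet, Finset.sum_union hdisj, Finset.sum_image (by simp), Finset.sum_image (by simp)]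
  simp only [r_mul_sr_zero]

lemma card_dihSet (X Y : Finset (ZMod n)) : #(dihSet n X Y) = #X + #Y := by
  rw [Finset.card_eq_sum_ones, sum_dihSet]
  simp

lemma card_filter_mul_r_mem_dihSet (X : Finset (ZMod n)) (c : ZMod n) :
    (#{k ∈ dihSet n X X | k⁻¹ * r c ∈ dihSet n X X} : ℤ) =
      (fbar X * (fbar X + fbarInv X)).coeff c := by
  rw [Finset.natCast_card_filter, sum_dihSet, mul_comm, coeff_mul_fbar, ← Finset.sum_add_distrib]
  simp [inv_r, inv_sr, r_mul_r, sr_mul_r, r_mem_dihSet, sr_mem_dihSet, coeff_fbar, coeff_fbarInv,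
    neg_add_eq_sub]

lemma card_filter_mul_sr_mem_dihSet (X : Finset (ZMod n)) (c : ZMod n) :
    (#{k ∈ dihSet n X X | k⁻¹ * sr c ∈ dihSet n X X} : ℤ) =
      (fbar X * (fbar X + fbarInv X)).coeff (-c) := by
  rw [Finset.natCast_card_filter, sum_dihSet, mul_comm, coeff_mul_fbar, ← Finset.sum_add_distrib]
  simp [inv_r, inv_sr, r_mul_sr, sr_mul_sr, r_mem_dihSet, sr_mem_dihSet, coeff_fbar, coeff_fbarInv,
    add_comm, sub_eq_add_neg]

end Dihedral

/-- `Dih(n,X,X) = Cay(D_n, X ∪ Xτ)` is a DSRG with parameters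
`(2n, 2|X|, μ, λ, t)` iff `t = μ` and `X̄·U̅_X = (λ−μ)X̄ + μC̄_n` in `ℤ[C_n]`,
where `U̅_X = X̄ + X^{(−1)}‾`. -/
theorem dihedrant_XX_isDSRG_iff (n : ℕ) [NeZero n] (X : Finset (ZMod n))
    (h0 : (0 : ZMod n) ∉ X) (μ lam t : ℤ) :
    IsDSRG (cayleyRel (dihSet n X X)) (2 * (n : ℤ)) (2 * (X.card : ℤ)) μ lam t ↔
      (t = μ ∧
       fbar X * (fbar X + fbarInv X) = (lam - μ) • fbar X + μ • cbar n) := by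
  have hn : 2 * (n : ℤ) = Fintype.card (DihedralGroup n) := by simp [DihedralGroup.card]
  have hk : 2 * (#X : ℤ) = #(dihSet n X X) := by simp [card_dihSet, two_mul]
  rw [hn, hk, isDSRG_cayleyRel_iff, forall_dihedralGroup, ← AddMonoidAlgebra.coeff_inj,
    Finsupp.ext_iff]
  simp only [card_filter_mul_r_mem_dihSet, card_filter_mul_sr_mem_dihSet,
    coeff_smul_fbar_add_smul_cbar, one_def, r.injEq, reduceCtorEq, r_mem_dihSet, sr_mem_dihSet,
    h0, not_false_eq_true, true_and, if_false]
  constructor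
  · rintro ⟨hr, hsr⟩
    have hP (c : ZMod n) := neg_neg c ▸ hsr (-c)
    refine ⟨?_, hP⟩
    simpa [hP 0, h0] using (hr 0).symm
  · rintro ⟨rfl, hP⟩
    refine ⟨fun c => ?_, fun c => hP (-c)⟩
    rw [hP c]
    split_ifs <;> simp_all
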